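/- Let P : ℝ^{n} → ℝ^{n×n} be continuous with symmetric positive definite values, and suppose there are a positive non-increasing function p̲ and a non-decreasing function p̄ with p̲(|e|) I ≤ P(e) ≤ p̄(|e|) I for all e. Then for all e₁, e₂ in ℝ^{n}, the Riemannian distance satisfies √(p̲(|e₁−e₂| + |e₂|)) |e₁−e₂| ≤ d_P(e₁, e₂) ≤ √(p̄(|e₁−e₂| + |e₂|)) |e₁−e₂|. -/

import Mathlib

/-!
On the closed ball of radius `|e₁ - e₂|` around `e₂` every point has norm at most
`R = |e₁ - e₂| + |e₂|`, so monotonicity gives `p̲(R) I ≤ P ≤ p̄(R) I` there. The straight segment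
from `e₁` to `e₂` stays in this ball, which gives the upper bound. For the lower bound, any path
from `e₁` to `e₂` stays in the ball after the last time `τ` it is at distance `≥ |e₁ - e₂|` from
`e₂`, and its Euclidean length after `τ` is at least that distance.
-/

open Real Set Filter
open scoped RealInnerProductSpace Topology

/-- Euclidean state space ℝⁿ. -/
abbrev Euc (n : ℕ) := EuclideanSpace ℝ (Fin n)

/-- Riemannian length (for the metric P) of the path s ↦ γ(s), s ∈ [0,1]. -/
noncomputable def pathLength {n : ℕ} (P : Euc n → Euc n →L[ℝ] Euc n)
    (γ : ℝ → Euc n) : ℝ :=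
  ∫ s in (0:ℝ)..1, Real.sqrt ⟪P (γ s) (deriv γ s), deriv γ s⟫

/-- Riemannian distance associated with the metric P: the infimum of the lengths
of C¹ paths joining the two points. -/
noncomputable def riemDist {n : ℕ} (P : Euc n → Euc n →L[ℝ] Euc n)
    (a b : Euc n) : ℝ :=
  sInf {L : ℝ | ∃ γ : ℝ → Euc n, ContDiff ℝ 1 γ ∧ γ 0 = a ∧ γ 1 = b ∧
    L = pathLength P γ}

open Metric

lemma exists_mem_Icc_le_forall_Ioc_lt {f : ℝ → ℝ} {a b r : ℝ} (hf : ContinuousOn f (Icc a b))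
    (hab : a ≤ b) (ha : r ≤ f a) : ∃ τ ∈ Icc a b, r ≤ f τ ∧ ∀ s ∈ Ioc τ b, f s < r := by
  have hS : IsCompact (Icc a b ∩ f ⁻¹' Ici r) :=
    isCompact_Icc.of_isClosed_subset
      (hf.preimage_isClosed_of_isClosed isClosed_Icc isClosed_Ici) inter_subset_left
  obtain ⟨τ, ⟨hτ, hfτ⟩, hτmax⟩ := hS.exists_isGreatest ⟨a, ⟨left_mem_Icc.2 hab, ha⟩⟩
  refine ⟨τ, hτ, hfτ, fun s hs => not_le.1 fun hfs => ?_⟩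
  exact (hτmax ⟨⟨hτ.1.trans hs.1.le, hs.2⟩, hfs⟩).not_gt hs.1

lemma sqrt_mul_le_sqrt_of_mul_sq_le {c t y : ℝ} (ht : 0 ≤ t) (h : c * t ^ 2 ≤ y) :
    √c * t ≤ √y := by
  simpa [sqrt_mul' c (sq_nonneg t), sqrt_sq ht] using sqrt_le_sqrt h

lemma sqrt_le_sqrt_mul_of_le_mul_sq {C t y : ℝ} (ht : 0 ≤ t) (h : y ≤ C * t ^ 2) :
    √y ≤ √C * t := by
  simpa [sqrt_mul' C (sq_nonneg t), sqrt_sq ht] using sqrt_le_sqrt h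

section PathLength

variable {n : ℕ} {P : Euc n → Euc n →L[ℝ] Euc n}

lemma pathLength_nonneg (γ : ℝ → Euc n) : 0 ≤ pathLength P γ :=
  intervalIntegral.integral_nonneg zero_le_one fun _ _ => sqrt_nonneg _

lemma continuous_sqrt_inner_deriv (hP : Continuous P) {γ : ℝ → Euc n} (hγ : ContDiff ℝ 1 γ) :
    Continuous fun s => √⟪P (γ s) (deriv γ s), deriv γ s⟫ :=
  have hγ' := hγ.continuous_deriv le_rfl
  (((hP.comp hγ.continuous).clm_apply hγ').inner hγ').sqrt

lemma riemDist_le_pathLength {a b : Euc n} {γ : ℝ → Euc n} (hγ : ContDiff ℝ 1 γ)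
    (h0 : γ 0 = a) (h1 : γ 1 = b) : riemDist P a b ≤ pathLength P γ :=
  csInf_le ⟨0, by rintro _ ⟨γ, -, -, -, rfl⟩; exact pathLength_nonneg γ⟩ ⟨γ, hγ, h0, h1, rfl⟩

lemma le_riemDist {a b : Euc n} {L : ℝ}
    (h : ∀ γ : ℝ → Euc n, ContDiff ℝ 1 γ → γ 0 = a → γ 1 = b → L ≤ pathLength P γ) :
    L ≤ riemDist P a b := by
  refine le_csInf ⟨_, _, AffineMap.contDiff_lineMap a b, AffineMap.lineMap_apply_zero a b,
    AffineMap.lineMap_apply_one a b, rfl⟩ ?_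
  rintro _ ⟨γ, hγ, h0, h1, rfl⟩
  exact h γ hγ h0 h1

lemma pathLength_lineMap_le (hP : Continuous P) {a b : Euc n} {C : ℝ}
    (hC : ∀ e ∈ segment ℝ a b, ∀ v, ⟪P e v, v⟫ ≤ C * ‖v‖ ^ 2) :
    pathLength P (AffineMap.lineMap a b) ≤ √C * dist a b := by
  have hderiv (s : ℝ) : deriv (AffineMap.lineMap a b : ℝ → Euc n) s = b - a :=
    AffineMap.hasDerivAt_lineMap.deriv
  calc pathLength P (AffineMap.lineMap a b) ≤ ∫ _ in (0 : ℝ)..1, √C * ‖b - a‖ := by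
        refine intervalIntegral.integral_mono_on zero_le_one
          ((continuous_sqrt_inner_deriv hP (AffineMap.contDiff_lineMap a b)).intervalIntegrable _ _)
          intervalIntegrable_const fun s hs => ?_
        have hs : AffineMap.lineMap a b s ∈ segment ℝ a b :=
          segment_eq_image_lineMap ℝ a b ▸ mem_image_of_mem _ hs
        rw [hderiv]
        exact sqrt_le_sqrt_mul_of_le_mul_sq (norm_nonneg _) (hC _ hs _)
    _ = √C * dist a b := by simp [dist_eq_norm']

lemma sqrt_mul_le_pathLength (hP : Continuous P) {x : Euc n} {r c : ℝ}
    (hc : ∀ e ∈ closedBall x r, ∀ v, c * ‖v‖ ^ 2 ≤ ⟪P e v, v⟫)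
    {γ : ℝ → Euc n} (hγ : ContDiff ℝ 1 γ) (h0 : r ≤ dist (γ 0) x) (h1 : γ 1 = x) :
    √c * r ≤ pathLength P γ := by
  obtain ⟨τ, hτ, hτr, hafter⟩ := exists_mem_Icc_le_forall_Ioc_lt
    (hγ.continuous.dist continuous_const).continuousOn zero_le_one h0
  have hint := continuous_sqrt_inner_deriv hP hγ
  have hdisp : ‖γ 1 - γ τ‖ ≤ ∫ s in τ..1, ‖deriv γ s‖ :=
    norm_sub_le_integral_of_norm_deriv_le_of_le hτ.2 hγ.continuous.continuousOn
      (hγ.differentiable one_ne_zero).differentiableOn (.of_forall fun _ _ => le_rfl)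
      ((hγ.continuous_deriv le_rfl).norm.intervalIntegrable _ _)
  calc √c * r ≤ √c * ‖γ 1 - γ τ‖ := by
        rw [h1, ← dist_eq_norm']
        exact mul_le_mul_of_nonneg_left hτr (sqrt_nonneg c)
    _ ≤ ∫ s in τ..1, √c * ‖deriv γ s‖ := by
        rw [intervalIntegral.integral_const_mul]
        exact mul_le_mul_of_nonneg_left hdisp (sqrt_nonneg c)
    _ ≤ ∫ s in τ..1, √⟪P (γ s) (deriv γ s), deriv γ s⟫ := by
        refine intervalIntegral.integral_mono_on_of_le_Ioo hτ.2
          (((hγ.continuous_deriv le_rfl).norm.const_mul _).intervalIntegrable _ _)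
          (hint.intervalIntegrable _ _) fun s hs => ?_
        have hs : γ s ∈ closedBall x r := (hafter s (Ioo_subset_Ioc_self hs)).le
        exact sqrt_mul_le_sqrt_of_mul_sq_le (norm_nonneg _) (hc _ hs _)
    _ ≤ pathLength P γ :=
        intervalIntegral.integral_mono_interval hτ.1 hτ.2 le_rfl
          (.of_forall fun _ => sqrt_nonneg _) (hint.intervalIntegrable _ _)

end PathLength

theorem riemannian_distance_bounds_general
    {n : ℕ}
    (P : Euc n → Euc n →L[ℝ] Euc n) (hP : Continuous P)
    (pl pu : ℝ → ℝ)
    (hpl : AntitoneOn pl (Ici 0)) (hpu : MonotoneOn pu (Ici 0))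
    (hPbnd : ∀ e v : Euc n,
      pl ‖e‖ * ‖v‖ ^ 2 ≤ ⟪P e v, v⟫ ∧ ⟪P e v, v⟫ ≤ pu ‖e‖ * ‖v‖ ^ 2) :
    ∀ e1 e2 : Euc n,
      Real.sqrt (pl (‖e1 - e2‖ + ‖e2‖)) * ‖e1 - e2‖ ≤ riemDist P e1 e2 ∧
      riemDist P e1 e2 ≤ Real.sqrt (pu (‖e1 - e2‖ + ‖e2‖)) * ‖e1 - e2‖ := by
  intro e1 e2
  set R := ‖e1 - e2‖ + ‖e2‖
  have hball : ∀ e ∈ closedBall e2 (dist e1 e2), ∀ v,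
      pl R * ‖v‖ ^ 2 ≤ ⟪P e v, v⟫ ∧ ⟪P e v, v⟫ ≤ pu R * ‖v‖ ^ 2 := by
    intro e he v
    have heR : ‖e‖ ≤ R := by
      have := norm_le_of_mem_closedBall he
      rw [dist_eq_norm] at this
      linarith
    have hR : R ∈ Ici 0 := mem_Ici.2 (by positivity)
    have he0 : ‖e‖ ∈ Ici 0 := mem_Ici.2 (norm_nonneg e)
    exact ⟨(mul_le_mul_of_nonneg_right (hpl he0 hR heR) (sq_nonneg _)).trans (hPbnd e v).1,
      (hPbnd e v).2.trans (mul_le_mul_of_nonneg_right (hpu he0 hR heR) (sq_nonneg _))⟩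
  rw [← dist_eq_norm]
  constructor
  · refine le_riemDist fun γ hγ h0 h1 => ?_
    exact sqrt_mul_le_pathLength hP (fun e he v => (hball e he v).1) hγ (h0 ▸ le_rfl) h1
  · have hseg : segment ℝ e1 e2 ⊆ closedBall e2 (dist e1 e2) :=
      (convex_closedBall _ _).segment_subset (mem_closedBall.2 le_rfl)
        (mem_closedBall_self dist_nonneg)
    calc riemDist P e1 e2 ≤ pathLength P (AffineMap.lineMap e1 e2) :=
          riemDist_le_pathLength (AffineMap.contDiff_lineMap e1 e2)
            (AffineMap.lineMap_apply_zero _ _) (AffineMap.lineMap_apply_one _ _)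
      _ ≤ √(pu R) * dist e1 e2 :=
          pathLength_lineMap_le hP fun e he v => (hball e (hseg he) v).2

/-- If P is a continuous symmetric positive definite metric with
p̲(|e|) I ≤ P(e) ≤ p̄(|e|) I, p̲ positive non-increasing and p̄ non-decreasing,
then √(p̲(|e₁−e₂|+|e₂|)) |e₁−e₂| ≤ d_P(e₁,e₂) ≤ √(p̄(|e₁−e₂|+|e₂|)) |e₁−e₂|. -/
theorem riemannian_distance_bounds
    {n : ℕ}
    (P : Euc n → Euc n →L[ℝ] Euc n) (hP : Continuous P)
    (hPsa : ∀ e, IsSelfAdjoint (P e))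
    (hPpos : ∀ (e v : Euc n), v ≠ 0 → 0 < ⟪P e v, v⟫)
    (pl pu : ℝ → ℝ)
    (hplpos : ∀ s, 0 ≤ s → 0 < pl s)
    (hpl : AntitoneOn pl (Ici 0)) (hpu : MonotoneOn pu (Ici 0))
    (hPbnd : ∀ e v : Euc n,
      pl ‖e‖ * ‖v‖ ^ 2 ≤ ⟪P e v, v⟫ ∧ ⟪P e v, v⟫ ≤ pu ‖e‖ * ‖v‖ ^ 2) :
    ∀ e1 e2 : Euc n,
      Real.sqrt (pl (‖e1 - e2‖ + ‖e2‖)) * ‖e1 - e2‖ ≤ riemDist P e1 e2 ∧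
      riemDist P e1 e2 ≤ Real.sqrt (pu (‖e1 - e2‖ + ‖e2‖)) * ‖e1 - e2‖ :=
  riemannian_distance_bounds_general P hP pl pu hpl hpu hPbnd
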